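/- Let n and α be positive integers and let p be a real number with 4/n^{α−1} ≤ p ≤ 1/2 − 1/n^{α−1}, where n^{α−1} denotes the real number n^α/n; set k₀ := (1 − p − 2/n^{α−1})/p. Then for every positive integer k: if (k : ℝ) ≤ k₀ then max{2n, 2n/k + ((k−1)/k)·(1−p)·n^α, (1−2p)·n^α} = (1−2p)·n^α, and if (k : ℝ) > k₀ then max{2n, 2n/k + ((k−1)/k)·(1−p)·n^α, (1−2p)·n^α} = 2n/k + ((k−1)/k)·(1−p)·n^α. -/

import Mathlib

/-!
Write `M = n ^ α` and `c = 2 n`, so that `2 / n^{α-1} = c / M`. The middle entry of the maximum exceeds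
the last one by `(c - (1 - p - k p) M) / k`, whose sign changes exactly when `k` crosses
`k₀ = (1 - p - c / M) / p`; the first entry never matters because `p ≤ 1/2 - 1/n^{α-1}` says
`c ≤ (1 - 2p) M`.
-/

section MixedBound

variable {c M p k : ℝ}

lemma mixedBound_sub_eq (hk : k ≠ 0) :
    c / k + (k - 1) / k * (1 - p) * M - (1 - 2 * p) * M = (c - (1 - p - k * p) * M) / k := by
  field_simp
  ring

lemma mixedBound_le_iff (hM : 0 < M) (hp : 0 < p) (hk : 0 < k) :
    c / k + (k - 1) / k * (1 - p) * M ≤ (1 - 2 * p) * M ↔ k ≤ (1 - p - c / M) / p := by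
  rw [← sub_nonpos, mixedBound_sub_eq hk.ne', div_le_iff₀ hk, zero_mul, sub_nonpos,
    ← div_le_iff₀ hM, le_div_iff₀ hp]
  constructor <;> intro h <;> linarith

end MixedBound

theorem stmt_4_general (n α : ℕ) (hn : 0 < n) (p : ℝ)
    (hp4 : 4 / ((n : ℝ) ^ α / (n : ℝ)) ≤ p)
    (hp12 : p ≤ 1 / 2 - 1 / ((n : ℝ) ^ α / (n : ℝ))) :
    ∀ k : ℕ, 0 < k →
      ((k : ℝ) ≤ (1 - p - 2 / ((n : ℝ) ^ α / (n : ℝ))) / p →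
        max (2 * (n : ℝ))
          (max (2 * (n : ℝ) / (k : ℝ) + (((k : ℝ) - 1) / (k : ℝ)) * (1 - p) * (n : ℝ) ^ α)
            ((1 - 2 * p) * (n : ℝ) ^ α))
          = (1 - 2 * p) * (n : ℝ) ^ α) ∧
      ((k : ℝ) > (1 - p - 2 / ((n : ℝ) ^ α / (n : ℝ))) / p →
        max (2 * (n : ℝ))
          (max (2 * (n : ℝ) / (k : ℝ) + (((k : ℝ) - 1) / (k : ℝ)) * (1 - p) * (n : ℝ) ^ α)
            ((1 - 2 * p) * (n : ℝ) ^ α))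
          = 2 * (n : ℝ) / (k : ℝ) + (((k : ℝ) - 1) / (k : ℝ)) * (1 - p) * (n : ℝ) ^ α) := by
  intro k hk
  have hM : 0 < (n : ℝ) ^ α := by positivity
  have hp : 0 < p := lt_of_lt_of_le (by positivity) hp4
  have hk' : (0 : ℝ) < k := by exact_mod_cast hk
  have hc : 2 / ((n : ℝ) ^ α / n) = 2 * n / (n : ℝ) ^ α := div_div_eq_mul_div _ _ _
  have hfirst : 2 * (n : ℝ) ≤ (1 - 2 * p) * (n : ℝ) ^ α := by
    rw [← div_le_iff₀ hM, ← hc]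
    linarith [show 2 / ((n : ℝ) ^ α / n) = 2 * (1 / ((n : ℝ) ^ α / n)) by ring]
  rw [hc]
  refine ⟨fun hle => ?_, fun hgt => ?_⟩
  · rw [max_eq_right ((mixedBound_le_iff hM hp hk').2 hle), max_eq_right hfirst]
  · have hlast := (not_le.1 (mt (mixedBound_le_iff hM hp hk').1 (not_le.2 hgt))).le
    rw [max_eq_left hlast, max_eq_right (hfirst.trans hlast)]

/-- Arithmetic content of the upper bounds (B1) and (B2) of Lemma B.1. -/
theorem stmt_4 (n α : ℕ) (hn : 0 < n) (hα : 0 < α) (p : ℝ)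
    (hp4 : 4 / ((n : ℝ) ^ α / (n : ℝ)) ≤ p)
    (hp12 : p ≤ 1 / 2 - 1 / ((n : ℝ) ^ α / (n : ℝ))) :
    ∀ k : ℕ, 0 < k →
      ((k : ℝ) ≤ (1 - p - 2 / ((n : ℝ) ^ α / (n : ℝ))) / p →
        max (2 * (n : ℝ))
          (max (2 * (n : ℝ) / (k : ℝ) + (((k : ℝ) - 1) / (k : ℝ)) * (1 - p) * (n : ℝ) ^ α)
            ((1 - 2 * p) * (n : ℝ) ^ α))
          = (1 - 2 * p) * (n : ℝ) ^ α) ∧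
      ((k : ℝ) > (1 - p - 2 / ((n : ℝ) ^ α / (n : ℝ))) / p →
        max (2 * (n : ℝ))
          (max (2 * (n : ℝ) / (k : ℝ) + (((k : ℝ) - 1) / (k : ℝ)) * (1 - p) * (n : ℝ) ^ α)
            ((1 - 2 * p) * (n : ℝ) ^ α))
          = 2 * (n : ℝ) / (k : ℝ) + (((k : ℝ) - 1) / (k : ℝ)) * (1 - p) * (n : ℝ) ^ α) :=
  stmt_4_general n α hn p hp4 hp12
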